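/- Let n ≥ 2 and let P_n be the graph on the 2n vertices a_0, …, a_{n−1}, b_0, …, b_{n−1} whose edges are: all pairs a_i a_j (i ≠ j), all pairs b_i b_j (i ≠ j), and a_i b_i for every i = 0, …, n−1 (i.e., the Cartesian product of the complete graph K_n with a single edge). Then for every α with 1/(n+1) ≤ α ≤ 1, every intercommunity edge a_i b_i satisfies κ^α(a_i b_i) ≥ 2(1−α)/n; in particular, when 1/(n+1) ≤ α < 1, every intercommunity edge a_i b_i has strictly positive curvature. -/

import Mathlib

/-! The exchange `aⱼ ↔ bⱼ` is an automorphism of `Pn n` swapping `aᵢ` and `bᵢ`, so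
`m_{bᵢ} = m_{aᵢ} ∘ swap`. Transport `m_{aᵢ}` to `m_{bᵢ}` by letting every vertex keep the mass
the two measures share there and send its excess to its mirror image, at distance `1`. The cost
is `1 − ∑ min(m_{aᵢ}, m_{bᵢ})`, and the shared mass is at least `2(1 − α)/n`, sitting at `aᵢ`
and `bᵢ`: this is where `α ≥ 1/(n+1)`, i.e. `(1 − α)/n ≤ α`, enters. -/

open Finset

/-- A probability measure on the vertex set. -/
def IsProbMeasure {V : Type*} [Fintype V] (μ : V → ℝ) : Prop :=
  (∀ z, 0 ≤ μ z) ∧ ∑ z, μ z = 1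

/-- A transference plan between two probability measures. -/
def IsTransferencePlan {V : Type*} [Fintype V] (μ ν : V → ℝ) (π : V → V → ℝ) : Prop :=
  (∀ i j, 0 ≤ π i j) ∧ (∀ i, ∑ j, π i j = μ i) ∧ (∀ j, ∑ i, π i j = ν j)

/-- The 1-Wasserstein distance between two measures on a graph:
the infimum of the transport cost over all transference plans. -/
noncomputable def Wass {V : Type*} [Fintype V] (G : SimpleGraph V) (μ ν : V → ℝ) : ℝ :=
  sInf {c : ℝ | ∃ π : V → V → ℝ, IsTransferencePlan μ ν π ∧
    c = ∑ i : V, ∑ j : V, π i j * (G.dist i j : ℝ)}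

open scoped Classical in
/-- The α-lazy random walk measure at a vertex `x`:
mass α at `x`, mass (1-α)/dₓ at each neighbour of `x`. -/
noncomputable def lazyWalk {V : Type*} [Fintype V] (G : SimpleGraph V) (α : ℝ) (x : V) :
    V → ℝ :=
  fun z =>
    if z = x then α
    else if G.Adj x z then (1 - α) / ((G.neighborSet x).ncard : ℝ) else 0

/-- The α-Ollivier-Ricci curvature of the edge `xy`: κ = 1 − W(mₓ, m_y). -/
noncomputable def kappa {V : Type*} [Fintype V] (G : SimpleGraph V) (α : ℝ) (x y : V) : ℝ :=
  1 - Wass G (lazyWalk G α x) (lazyWalk G α y)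

/-- The Cartesian product of the complete graph `K n` with a single edge: two complete
copies of `Fin n` (the `a` side `Sum.inl` and the `b` side `Sum.inr`), together with all
intercommunity edges `aᵢbᵢ`, `i = 0,…,n−1`. -/
def Pn (n : ℕ) : SimpleGraph (Fin n ⊕ Fin n) :=
  SimpleGraph.fromRel (fun u v =>
    match u, v with
    | Sum.inl _, Sum.inl _ => True
    | Sum.inr _, Sum.inr _ => True
    | Sum.inl i, Sum.inr j => i = j
    | Sum.inr _, Sum.inl _ => False)

namespace SimpleGraph

variable {V : Type*} [Fintype V] (G : SimpleGraph V)

theorem wass_le_of_isTransferencePlan {μ ν : V → ℝ} {π : V → V → ℝ}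
    (hπ : IsTransferencePlan μ ν π) :
    Wass G μ ν ≤ ∑ u, ∑ v, π u v * (G.dist u v : ℝ) := by
  refine csInf_le ⟨0, ?_⟩ ⟨π, hπ, rfl⟩
  rintro c ⟨ρ, ⟨hρ, -, -⟩, rfl⟩
  exact sum_nonneg fun u _ => sum_nonneg fun v _ => mul_nonneg (hρ u v) (Nat.cast_nonneg _)

section lazyWalk

variable {G} {α : ℝ} {x z : V}

@[simp]
theorem lazyWalk_self : lazyWalk G α x x = α := by
  simp [lazyWalk]

theorem lazyWalk_of_adj (h : G.Adj x z) :
    lazyWalk G α x z = (1 - α) / (G.neighborSet x).ncard := by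
  simp [lazyWalk, h.ne', h]

theorem lazyWalk_nonneg (h0 : 0 ≤ α) (h1 : α ≤ 1) (x z : V) : 0 ≤ lazyWalk G α x z := by
  unfold lazyWalk
  split_ifs
  exacts [h0, div_nonneg (sub_nonneg.2 h1) (Nat.cast_nonneg _), le_rfl]

theorem sum_lazyWalk (hx : (G.neighborSet x).ncard ≠ 0) : ∑ z, lazyWalk G α x z = 1 := by
  classical
  have hsplit : ∀ z, lazyWalk G α x z =
      (if z = x then α else 0) + if G.Adj x z then (1 - α) / (G.neighborSet x).ncard else 0 := by
    intro z
    by_cases hz : z = x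
    · subst hz; simp [lazyWalk]
    · simp [lazyWalk, hz]
  have hcard : (G.neighborSet x).ncard = #{z | G.Adj x z} := by
    rw [← Set.ncard_coe_finset]; congr; ext; simp
  simp only [hsplit, sum_add_distrib, sum_ite_eq', mem_univ, if_true, sum_ite, sum_const_zero,
    add_zero, sum_const, nsmul_eq_mul, ← hcard]
  field_simp
  ring

theorem lazyWalk_iso {W : Type*} [Fintype W] {G' : SimpleGraph W} (φ : G ≃g G') (x z : V) :
    lazyWalk G' α (φ x) (φ z) = lazyWalk G α x z := by
  have hdeg : (G'.neighborSet (φ x)).ncard = (G.neighborSet x).ncard := by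
    rw [← φ.image_neighborSet, Set.ncard_image_of_injective _ φ.injective]
  simp only [lazyWalk, hdeg]
  rw [φ.injective.eq_iff, φ.map_adj_iff]

end lazyWalk

end SimpleGraph

section involution

variable {V : Type*} [Fintype V] [DecidableEq V] (σ : V → V) (μ : V → ℝ)

def involutionPlan (u v : V) : ℝ :=
  (if v = u then min (μ u) (μ (σ u)) else 0) + if v = σ u then μ u - min (μ u) (μ (σ u)) else 0

variable {σ μ}

theorem isTransferencePlan_involutionPlan (hσ : Function.Involutive σ) (hμ : ∀ z, 0 ≤ μ z) :
    IsTransferencePlan μ (μ ∘ σ) (involutionPlan σ μ) := by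
  refine ⟨fun u v => ?_, fun u => ?_, fun v => ?_⟩
  · have := min_le_left (μ u) (μ (σ u))
    unfold involutionPlan
    split_ifs <;> simp [hμ, this]
  · simp [involutionPlan, sum_add_distrib]
  · have hmem : ∀ u, v = σ u ↔ u = σ v := fun u => by
      constructor <;> rintro rfl <;> simp [hσ _]
    simp only [involutionPlan, sum_add_distrib, sum_ite_eq, hmem, sum_ite_eq', mem_univ, if_true,
      hσ v, Function.comp_apply, min_comm (μ v)]
    ring

theorem sum_involutionPlan_mul_dist (G : SimpleGraph V) :
    ∑ u, ∑ v, involutionPlan σ μ u v * (G.dist u v : ℝ) =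
      ∑ u, (μ u - min (μ u) (μ (σ u))) * G.dist u (σ u) := by
  simp [involutionPlan, add_mul, sum_add_distrib]

theorem wass_comp_involutive_le (G : SimpleGraph V) (hσ : Function.Involutive σ)
    (hμ : ∀ z, 0 ≤ μ z) :
    Wass G μ (μ ∘ σ) ≤ ∑ u, (μ u - min (μ u) (μ (σ u))) * G.dist u (σ u) :=
  (sum_involutionPlan_mul_dist G).symm ▸
    G.wass_le_of_isTransferencePlan (isTransferencePlan_involutionPlan hσ hμ)

end involution

section Pn

variable {n : ℕ}

theorem Pn_adj_inl_inr (i : Fin n) : (Pn n).Adj (.inl i) (.inr i) := by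
  simp [Pn]

def Pn.swapIso : Pn n ≃g Pn n where
  toEquiv := Equiv.sumComm _ _
  map_rel_iff' {u v} := by
    rcases u with j | j <;> rcases v with k | k <;> simp [Pn, eq_comm]

@[simp]
theorem Pn.swapIso_apply (u : Fin n ⊕ Fin n) : Pn.swapIso u = u.swap :=
  rfl

theorem Pn_dist_swap (u : Fin n ⊕ Fin n) : (Pn n).dist u u.swap = 1 := by
  rw [SimpleGraph.dist_eq_one_iff_adj]
  rcases u with j | j
  exacts [Pn_adj_inl_inr j, (Pn_adj_inl_inr j).symm]

theorem Pn_ncard_neighborSet_inl (i : Fin n) : ((Pn n).neighborSet (.inl i)).ncard = n := by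
  have hnbr : (Pn n).neighborSet (.inl i) =
      ↑(insert (Sum.inr i) ((univ.erase i).map .inl) : Finset (Fin n ⊕ Fin n)) := by
    ext (j | j) <;> simp [Pn, eq_comm]
  rw [hnbr, Set.ncard_coe_finset, card_insert_of_notMem (by simp), card_map,
    card_erase_of_mem (mem_univ i), card_univ, Fintype.card_fin, Nat.sub_add_cancel i.pos]

theorem lazyWalk_Pn_inr (α : ℝ) (i : Fin n) :
    lazyWalk (Pn n) α (.inr i) = lazyWalk (Pn n) α (.inl i) ∘ Sum.swap := by
  ext z
  simpa using SimpleGraph.lazyWalk_iso (α := α) Pn.swapIso (.inl i) z.swap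

theorem wass_Pn_le {α : ℝ} (hα0 : 1 / ((n : ℝ) + 1) ≤ α) (hα1 : α ≤ 1) (i : Fin n) :
    Wass (Pn n) (lazyWalk (Pn n) α (.inl i)) (lazyWalk (Pn n) α (.inr i)) ≤
      1 - 2 * (1 - α) / n := by
  have hn : (0 : ℝ) < n := Nat.cast_pos.2 i.pos
  have hβα : (1 - α) / n ≤ α := by
    rw [div_le_iff₀ hn]
    rw [div_le_iff₀ (by linarith)] at hα0
    linarith
  have hμ : ∀ z, 0 ≤ lazyWalk (Pn n) α (.inl i) z :=
    SimpleGraph.lazyWalk_nonneg ((one_div_pos.2 (by linarith)).le.trans hα0) hα1 _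
  have hμ_sum : ∑ z, lazyWalk (Pn n) α (.inl i) z = 1 :=
    SimpleGraph.sum_lazyWalk (by rw [Pn_ncard_neighborSet_inl]; exact i.pos.ne')
  have hμ_inr : lazyWalk (Pn n) α (.inl i) (.inr i) = (1 - α) / n := by
    rw [SimpleGraph.lazyWalk_of_adj (Pn_adj_inl_inr i), Pn_ncard_neighborSet_inl]
  rw [lazyWalk_Pn_inr]
  set μ := lazyWalk (Pn n) α (.inl i)
  have hshared : 2 * (1 - α) / n ≤ ∑ u, min (μ u) (μ u.swap) := by
    calc 2 * (1 - α) / n = min (μ (.inl i)) (μ (.inr i)) + min (μ (.inr i)) (μ (.inl i)) := by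
          simp [μ, hμ_inr, hβα]; ring
      _ ≤ _ := add_le_sum (f := fun u => min (μ u) (μ u.swap))
          (fun u _ => le_min (hμ u) (hμ _)) (mem_univ _) (mem_univ _) Sum.inl_ne_inr
  refine (wass_comp_involutive_le _ Sum.swap_swap hμ).trans ?_
  simp only [Pn_dist_swap, Nat.cast_one, mul_one, sum_sub_distrib, hμ_sum]
  linarith

end Pn

theorem positive_curvature_product_config_general (n : ℕ)
    (α : ℝ) (hα0 : 1 / ((n : ℝ) + 1) ≤ α) (hα1 : α ≤ 1) (i : Fin n) :
    2 * (1 - α) / (n : ℝ) ≤ kappa (Pn n) α (Sum.inl i) (Sum.inr i) ∧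
    (α < 1 → 0 < kappa (Pn n) α (Sum.inl i) (Sum.inr i)) := by
  have hbound : 2 * (1 - α) / (n : ℝ) ≤ kappa (Pn n) α (Sum.inl i) (Sum.inr i) := by
    rw [kappa]
    linarith [wass_Pn_le hα0 hα1 i]
  refine ⟨hbound, fun hα => lt_of_lt_of_le ?_ hbound⟩
  exact div_pos (by linarith) (Nat.cast_pos.2 i.pos)

/-- In `Pn n` (`n ≥ 2`), for every `α` with `1/(n+1) ≤ α ≤ 1`, every
intercommunity edge `aᵢbᵢ` satisfies `κ^α(aᵢbᵢ) ≥ 2(1−α)/n`; in particular, when moreover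
`α < 1`, every intercommunity edge has strictly positive curvature. -/
theorem positive_curvature_product_config (n : ℕ) (hn : 2 ≤ n)
    (α : ℝ) (hα0 : 1 / ((n : ℝ) + 1) ≤ α) (hα1 : α ≤ 1) (i : Fin n) :
    2 * (1 - α) / (n : ℝ) ≤ kappa (Pn n) α (Sum.inl i) (Sum.inr i) ∧
    (α < 1 → 0 < kappa (Pn n) α (Sum.inl i) (Sum.inr i)) :=
  positive_curvature_product_config_general n α hα0 hα1 i
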